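/- Comparison inequality for binary divergences (claim in the proof of Theorem 16). For every real t ≥ 1 and every x ∈ [0,1]: K_{1/(1+t)}(x/t) ≤ K_{t/(1+t)}(x). -/

import Mathlib

/-!
`K_y(x)` is the Kullback–Leibler divergence of Bernoulli(`x`) from Bernoulli(`y`). Split the
outcome of probability `x` into two cells, of masses `x/t` and `x - x/t`, and the corresponding
mass `t/(1+t)` into `1/(1+t)` and `(t-1)/(1+t)`: both cells have the same likelihood ratio, so
`K_{t/(1+t)}(x)` is the divergence between these three-point distributions. Merging the second cell
with the outcome `1 - x` (whose mass is `1/(1+t)`) yields exactly the pair defining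
`K_{1/(1+t)}(x/t)`, and by the log-sum inequality merging cells cannot increase a divergence.
-/

/-- The binary-divergence-type function `K_y(x) = x log₂(x/y) + (1-x) log₂((1-x)/(1-y))`. -/
noncomputable def Kfun (y x : ℝ) : ℝ :=
  x * Real.logb 2 (x / y) + (1 - x) * Real.logb 2 ((1 - x) / (1 - y))

open Real

/-- The two-term log-sum inequality: Jensen for `u ↦ u log u` at `a/c`, `b/d` with weights
`c/(c+d)`, `d/(c+d)`. -/
theorem add_mul_log_div_add_le {a b c d : ℝ} (ha : 0 ≤ a) (hb : 0 ≤ b) (hc : 0 < c) (hd : 0 < d) :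
    (a + b) * log ((a + b) / (c + d)) ≤ a * log (a / c) + b * log (b / d) := by
  have hcd : 0 < c + d := by positivity
  have hconv := convexOn_mul_log.2 (Set.mem_Ici.2 (div_nonneg ha hc.le))
    (Set.mem_Ici.2 (div_nonneg hb hd.le)) (div_pos hc hcd).le (div_pos hd hcd).le
    (by field_simp)
  have hmix : c / (c + d) * (a / c) + d / (c + d) * (b / d) = (a + b) / (c + d) := by
    field_simp
  simp only [smul_eq_mul, hmix] at hconv
  calc (a + b) * log ((a + b) / (c + d))
      = (c + d) * ((a + b) / (c + d) * log ((a + b) / (c + d))) := by field_simp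
    _ ≤ (c + d) * (c / (c + d) * (a / c * log (a / c)) + d / (c + d) * (b / d * log (b / d))) :=
      mul_le_mul_of_nonneg_left hconv hcd.le
    _ = a * log (a / c) + b * log (b / d) := by field_simp

theorem add_mul_logb_div_add_le {β a b c d : ℝ} (hβ : 1 < β) (ha : 0 ≤ a) (hb : 0 ≤ b)
    (hc : 0 < c) (hd : 0 < d) :
    (a + b) * logb β ((a + b) / (c + d)) ≤ a * logb β (a / c) + b * logb β (b / d) := by
  simp only [logb, ← mul_div_assoc, ← add_div]
  exact div_le_div_of_nonneg_right (add_mul_log_div_add_le ha hb hc hd) (log_pos hβ).le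

/-- Comparison inequality for binary divergences (claim in the proof of Theorem 16):
for `t ≥ 1` and `x ∈ [0,1]`, `K_{1/(1+t)}(x/t) ≤ K_{t/(1+t)}(x)`. -/
theorem Kfun_comparison (t : ℝ) (ht : 1 ≤ t) (x : ℝ) (hx : x ∈ Set.Icc (0 : ℝ) 1) :
    Kfun (1 / (1 + t)) (x / t) ≤ Kfun (t / (1 + t)) x := by
  obtain ⟨hx0, hx1⟩ := hx
  rcases ht.eq_or_lt with rfl | ht_gt
  · norm_num
  have ht0 : t ≠ 0 := by positivity
  have ht1 : t - 1 ≠ 0 := sub_ne_zero.2 ht_gt.ne'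
  have hmass : x - x / t + (1 - x) = 1 - x / t := by ring
  have hweight : (t - 1) / (1 + t) + 1 / (1 + t) = 1 - 1 / (1 + t) := by field_simp; ring
  have hratio : (x / t) / (1 / (1 + t)) = x / (t / (1 + t)) := by field_simp
  have hratio' : (x - x / t) / ((t - 1) / (1 + t)) = x / (t / (1 + t)) := by field_simp
  have hweight' : 1 - t / (1 + t) = 1 / (1 + t) := by field_simp; ring
  have hmerge := add_mul_logb_div_add_le one_lt_two (a := x - x / t) (b := 1 - x)
    (c := (t - 1) / (1 + t)) (d := 1 / (1 + t))
    (sub_nonneg.2 (div_le_self hx0 ht)) (sub_nonneg.2 hx1) (by bound) (by positivity)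
  rw [hmass, hweight, hratio'] at hmerge
  rw [Kfun, Kfun, hratio, hweight']
  linarith
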